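/- arXiv:1108.5687 — 6 statements merged into one kernel-verified Lean document; each statement's English description precedes it below -/
import Mathlib

section
/- Given a cube of integers (a,b,c,d,e,f,g,h), define Q1(x,y) = (be-af)x^2 + (bg+de-ah-cf)xy + (dg-ch)y^2, Q2(x,y) = (ce-ag)x^2 + (cf+de-ah-bg)xy + (df-bh)y^2, Q3(x,y) = (bc-ad)x^2 + (bg+cf-ah-de)xy + (fg-eh)y^2. Then Q1, Q2, Q3 all have the same discriminant. -/
/-! Each of the three discriminants expands to Cayley's hyperdeterminant of the cube, a quartic
that is invariant under permuting the three directions of the cube. -/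

def cayleyHyperdet {R : Type*} [CommRing R] (a b c d e f g h : R) : R :=
  a ^ 2 * h ^ 2 + b ^ 2 * g ^ 2 + c ^ 2 * f ^ 2 + d ^ 2 * e ^ 2
    - 2 * (a * b * g * h + a * c * f * h + a * d * e * h
      + b * c * f * g + b * d * e * g + c * d * e * f)
    + 4 * (a * d * f * g + b * c * e * h)

section
variable {R : Type*} [CommRing R] (a b c d e f g h : R)

theorem discrim_first_slicing :
    (b * g + d * e - a * h - c * f) ^ 2 - 4 * (b * e - a * f) * (d * g - c * h)
      = cayleyHyperdet a b c d e f g h := by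
  unfold cayleyHyperdet; ring

theorem discrim_second_slicing :
    (c * f + d * e - a * h - b * g) ^ 2 - 4 * (c * e - a * g) * (d * f - b * h)
      = cayleyHyperdet a b c d e f g h := by
  unfold cayleyHyperdet; ring

theorem discrim_third_slicing :
    (b * g + c * f - a * h - d * e) ^ 2 - 4 * (b * c - a * d) * (f * g - e * h)
      = cayleyHyperdet a b c d e f g h := by
  unfold cayleyHyperdet; ring

end

/-- The three quadratic forms attached to a Bhargava cube (a,b,c,d,e,f,g,h)
all have the same discriminant. -/
theorem stmt_2 (a b c d e f g h : ℤ) :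
    (b * g + d * e - a * h - c * f) ^ 2
        - 4 * (b * e - a * f) * (d * g - c * h)
      = (c * f + d * e - a * h - b * g) ^ 2
        - 4 * (c * e - a * g) * (d * f - b * h) ∧
    (c * f + d * e - a * h - b * g) ^ 2
        - 4 * (c * e - a * g) * (d * f - b * h)
      = (b * g + c * f - a * h - d * e) ^ 2
        - 4 * (b * c - a * d) * (f * g - e * h) := by
  rw [discrim_first_slicing, discrim_second_slicing, discrim_third_slicing]
  exact ⟨rfl, rfl⟩
end

section
/- For integers A1, A2, B, C the identity (A1·x1^2 + B·x1·y1 + A2·C·y1^2)(A2·x2^2 + B·x2·y2 + A1·C·y2^2) = A1·A2·X^2 + B·X·Y + C·Y^2 holds, where X = x1·x2 - C·y1·y2 and Y = A1·x1·y2 + A2·x2·y1 + B·y1·y2. -/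
theorem dirichlet_composition_concordant {R : Type*} [CommRing R] (A1 A2 B C x1 y1 x2 y2 : R) :
    (A1 * x1 ^ 2 + B * x1 * y1 + A2 * C * y1 ^ 2)
      * (A2 * x2 ^ 2 + B * x2 * y2 + A1 * C * y2 ^ 2)
    = A1 * A2 * (x1 * x2 - C * y1 * y2) ^ 2
      + B * (x1 * x2 - C * y1 * y2)
          * (A1 * x1 * y2 + A2 * x2 * y1 + B * y1 * y2)
      + C * (A1 * x1 * y2 + A2 * x2 * y1 + B * y1 * y2) ^ 2 := by
  ring

/-- Dirichlet's composition identity for concordant forms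
(A1,B,A2·C) and (A2,B,A1·C). -/
theorem stmt_4 (A1 A2 B C x1 y1 x2 y2 : ℤ) :
    (A1 * x1 ^ 2 + B * x1 * y1 + A2 * C * y1 ^ 2)
      * (A2 * x2 ^ 2 + B * x2 * y2 + A1 * C * y2 ^ 2)
    = A1 * A2 * (x1 * x2 - C * y1 * y2) ^ 2
      + B * (x1 * x2 - C * y1 * y2)
          * (A1 * x1 * y2 + A2 * x2 * y1 + B * y1 * y2)
      + C * (A1 * x1 * y2 + A2 * x2 * y1 + B * y1 * y2) ^ 2 :=
  dirichlet_composition_concordant A1 A2 B C x1 y1 x2 y2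
end

section
/- Let Q = (A, B, C) be a primitive positive definite binary quadratic form with discriminant -4m that represents a square a^2 with gcd(a, 4m) = 1, say Q(x0,y0) = a^2 with gcd(x0,y0)=1. Then Q is SL_2(Z)-equivalent to a form whose first coefficient is a^2, and there exists a primitive form Q1 = (n, B', n·C') with n^2 = a^2 (n > 0) such that the Dirichlet composition of Q1 with itself is equivalent to Q. -/
/-!
If `Q` primitively represents `k` at `(x₀, y₀)`, complete `(x₀, y₀)` to a matrix of `SL₂(ℤ)`;
substituting it into `Q` gives an equivalent form `(k, B', C')` of the same discriminant.
With `k = a²`, the form `(|a|, B', |a| C')` is primitive because a common divisor of `a` and `B'`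
divides the discriminant `B'² - 4a²C' = -4m`, which is coprime to `a`.
-/

theorem exists_sl2_transform_first_coeff_eq {A B C x0 y0 : ℤ} (hxy : IsCoprime x0 y0) :
    ∃ r s t u B' C' : ℤ, r * u - s * t = 1 ∧
      B' ^ 2 - 4 * (A * x0 ^ 2 + B * x0 * y0 + C * y0 ^ 2) * C' = B ^ 2 - 4 * A * C ∧
      ∀ x y : ℤ,
        A * (r * x + s * y) ^ 2 + B * (r * x + s * y) * (t * x + u * y)
          + C * (t * x + u * y) ^ 2
        = (A * x0 ^ 2 + B * x0 * y0 + C * y0 ^ 2) * x ^ 2 + B' * x * y + C' * y ^ 2 := by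
  obtain ⟨u, v, huv⟩ := hxy
  have hdet : x0 * u - (-v) * y0 = 1 := by linear_combination huv
  refine ⟨x0, -v, y0, u, 2 * A * x0 * (-v) + B * (x0 * u + (-v) * y0) + 2 * C * y0 * u,
    A * v ^ 2 + B * (-v) * u + C * u ^ 2, hdet, ?_, fun x y => by ring⟩
  linear_combination (B ^ 2 - 4 * A * C) * (x0 * u - (-v) * y0 + 1) * hdet

theorem exists_sl2_transform_symm {A B C A' B' C' r s t u : ℤ} (hdet : r * u - s * t = 1)
    (hQ : ∀ x y : ℤ,
      A * (r * x + s * y) ^ 2 + B * (r * x + s * y) * (t * x + u * y) + C * (t * x + u * y) ^ 2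
        = A' * x ^ 2 + B' * x * y + C' * y ^ 2) :
    ∃ r' s' t' u' : ℤ, r' * u' - s' * t' = 1 ∧
      ∀ x y : ℤ,
        A' * (r' * x + s' * y) ^ 2 + B' * (r' * x + s' * y) * (t' * x + u' * y)
          + C' * (t' * x + u' * y) ^ 2
        = A * x ^ 2 + B * x * y + C * y ^ 2 := by
  refine ⟨u, -s, -t, r, by linear_combination hdet, fun x y => ?_⟩
  linear_combination -hQ (u * x + -s * y) (-t * x + r * y)
    + (r * u - s * t + 1) * (A * x ^ 2 + B * x * y + C * y ^ 2) * hdet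

theorem Int.gcd_gcd_mul_eq_one_of_gcd_disc {n B C : ℤ}
    (h : Int.gcd n (B ^ 2 - 4 * n ^ 2 * C) = 1) :
    Int.gcd n (Int.gcd B (n * C)) = 1 := by
  have hn : (Int.gcd n (Int.gcd B (n * C)) : ℤ) ∣ n := Int.gcd_dvd_left _ _
  have hB : (Int.gcd n (Int.gcd B (n * C)) : ℤ) ∣ B :=
    (Int.gcd_dvd_right _ _).trans (Int.gcd_dvd_left _ _)
  have hdvd := Int.dvd_gcd hn (dvd_sub (dvd_pow hB two_ne_zero)
    (((dvd_pow hn two_ne_zero).mul_left 4).mul_right C))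
  rw [h] at hdvd
  exact Nat.eq_one_of_dvd_one (by exact_mod_cast hdvd)

theorem stmt_5_general (A B C m a x0 y0 : ℤ)
    (hdisc : B ^ 2 - 4 * A * C = -4 * m)
    (hrep : A * x0 ^ 2 + B * x0 * y0 + C * y0 ^ 2 = a ^ 2)
    (hxy : IsCoprime x0 y0)
    (ha : Int.gcd a (4 * m) = 1) :
    (∃ r s t u B' C' : ℤ, r * u - s * t = 1 ∧
      ∀ x y : ℤ,
        A * (r * x + s * y) ^ 2 + B * (r * x + s * y) * (t * x + u * y)
          + C * (t * x + u * y) ^ 2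
        = a ^ 2 * x ^ 2 + B' * x * y + C' * y ^ 2) ∧
    (∃ n B' C' : ℤ, 0 < n ∧ n ^ 2 = a ^ 2 ∧
      Int.gcd n (Int.gcd B' (n * C')) = 1 ∧
      ∃ r s t u : ℤ, r * u - s * t = 1 ∧
        ∀ x y : ℤ,
          n ^ 2 * (r * x + s * y) ^ 2
            + B' * (r * x + s * y) * (t * x + u * y)
            + C' * (t * x + u * y) ^ 2
          = A * x ^ 2 + B * x * y + C * y ^ 2) := by
  obtain ⟨r, s, t, u, B', C', hdet, hdisc', hQ⟩ :=
    exists_sl2_transform_first_coeff_eq (A := A) (B := B) (C := C) hxy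
  rw [hrep] at hdisc' hQ
  have ha0 : a ≠ 0 := by
    rintro rfl
    simp [Int.gcd] at ha
    omega
  refine ⟨⟨r, s, t, u, B', C', hdet, hQ⟩, |a|, B', C', abs_pos.mpr ha0, sq_abs a, ?_, ?_⟩
  · apply Int.gcd_gcd_mul_eq_one_of_gcd_disc
    rw [sq_abs, hdisc', hdisc, neg_mul, Int.gcd_neg, Int.gcd, Int.natAbs_abs]
    exact ha
  · simpa only [sq_abs] using exists_sl2_transform_symm hdet hQ

/-- A primitive positive definite form Q = (A,B,C) of discriminant -4m
that primitively represents a square a² with gcd(a,4m) = 1 is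
SL₂(ℤ)-equivalent to a form with first coefficient a², and there is a
primitive form Q1 = (n, B', n·C') with n² = a², n > 0, whose Dirichlet
composition with itself, namely (n², B', C'), is equivalent to Q. -/
theorem stmt_5 (A B C m a x0 y0 : ℤ)
    (hprim : Int.gcd A (Int.gcd B C) = 1)
    (hApos : 0 < A) (hmpos : 0 < m)
    (hdisc : B ^ 2 - 4 * A * C = -4 * m)
    (hrep : A * x0 ^ 2 + B * x0 * y0 + C * y0 ^ 2 = a ^ 2)
    (hxy : IsCoprime x0 y0)
    (ha : Int.gcd a (4 * m) = 1) :
    (∃ r s t u B' C' : ℤ, r * u - s * t = 1 ∧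
      ∀ x y : ℤ,
        A * (r * x + s * y) ^ 2 + B * (r * x + s * y) * (t * x + u * y)
          + C * (t * x + u * y) ^ 2
        = a ^ 2 * x ^ 2 + B' * x * y + C' * y ^ 2) ∧
    (∃ n B' C' : ℤ, 0 < n ∧ n ^ 2 = a ^ 2 ∧
      Int.gcd n (Int.gcd B' (n * C')) = 1 ∧
      ∃ r s t u : ℤ, r * u - s * t = 1 ∧
        ∀ x y : ℤ,
          n ^ 2 * (r * x + s * y) ^ 2
            + B' * (r * x + s * y) * (t * x + u * y)
            + C' * (t * x + u * y) ^ 2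
          = A * x ^ 2 + B * x * y + C * y ^ 2) :=
  stmt_5_general A B C m a x0 y0 hdisc hrep hxy ha
end

section
/- If a prime p can be written p = a^2 + 4b^2 with a, b integers, then p ≡ 1 (mod 4) and the Pell-type equation T^2 - p·U^2 = -1 has integer solutions. -/
/-!
Reducing `p = a² + 4b²` modulo 4 gives `p ≡ a² ≡ 1`, since `4 ∤ p`.
For the negative Pell equation, let `x² - p y² = 1` be the fundamental solution. Modulo 4, `x` is
odd and `y` even, so `x = 2m + 1`, `y = 2k` and `m (m + 1) = p k²`. The factors are coprime, so one
of them is a square and the other is `p` times a square. If `m = p v²` and `m + 1 = u²`, then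
`(u, v)` is a solution of the positive equation smaller than the fundamental one; hence `m = u²`,
`m + 1 = p v²`, and `u² - p v² = -1`.
-/

lemma Int.sq_emod_four_eq_zero_or_one (z : ℤ) : z ^ 2 % 4 = 0 ∨ z ^ 2 % 4 = 1 := by
  rcases Int.even_or_odd z with ⟨k, rfl⟩ | hz
  · left
    rw [show (k + k) ^ 2 = 4 * k ^ 2 by ring]
    exact Int.mul_emod_right 4 _
  · exact Or.inr (Int.sq_mod_four_eq_one_of_odd hz)

lemma Nat.Prime.mod_four_eq_one_of_eq_sq_add_four_mul_sq {p : ℕ} (hp : p.Prime) {a b : ℤ}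
    (h : (p : ℤ) = a ^ 2 + 4 * b ^ 2) : p % 4 = 1 := by
  have ha : Odd a := by
    refine Int.not_even_iff_odd.mp fun ⟨c, hc⟩ => ?_
    have h4 : (4 : ℤ) ∣ p := ⟨c ^ 2 + b ^ 2, by rw [h, hc]; ring⟩
    have := (Nat.prime_dvd_prime_iff_eq Nat.prime_two hp).mp
      (Nat.dvd_trans (by norm_num) (Int.natCast_dvd_natCast.mp h4))
    subst this
    omega
  have := Int.sq_mod_four_eq_one_of_odd ha
  omega

lemma Pell.odd_and_even_of_sq_sub_mul_sq_eq_one {d x y : ℤ} (hd : d % 4 = 1)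
    (h : x ^ 2 - d * y ^ 2 = 1) : Odd x ∧ Even y := by
  have hy : Even y := by
    refine Int.not_odd_iff_even.mp fun hy => ?_
    have hdy : d * y ^ 2 % 4 = 1 := by
      rw [Int.mul_emod, hd, Int.sq_mod_four_eq_one_of_odd hy]; rfl
    rcases Int.sq_emod_four_eq_zero_or_one x with hx | hx <;> omega
  obtain ⟨k, rfl⟩ := hy
  have hx : Odd (x ^ 2) := ⟨2 * d * k ^ 2, by linear_combination h⟩
  exact ⟨(Int.odd_pow' two_ne_zero).mp hx, ⟨k, rfl⟩⟩

lemma Int.exists_eq_sq_of_isCoprime_of_mul_eq_sq {a b c : ℤ} (hab : IsCoprime a b) (ha : 0 ≤ a)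
    (heq : a * b = c ^ 2) : ∃ u : ℤ, a = u ^ 2 := by
  obtain ⟨u, hu | hu⟩ := Int.sq_of_isCoprime hab heq
  · exact ⟨u, hu⟩
  · exact ⟨0, by nlinarith [sq_nonneg u]⟩

lemma Int.exists_sq_of_isCoprime_of_mul_eq_prime_mul_sq {p x y k : ℤ} (hp : Prime p) (hp0 : 0 < p)
    (hxy : IsCoprime x y) (hx : 0 ≤ x) (hy : 0 ≤ y) (h : x * y = p * k ^ 2) :
    ∃ u v : ℤ, (x = p * v ^ 2 ∧ y = u ^ 2) ∨ (x = u ^ 2 ∧ y = p * v ^ 2) := by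
  rcases hp.dvd_mul.mp ⟨k ^ 2, h⟩ with ⟨s, rfl⟩ | ⟨s, rfl⟩
  · have hs : s * y = k ^ 2 := mul_left_cancel₀ hp0.ne' (by rw [← h]; ring)
    have hcop : IsCoprime s y := hxy.of_mul_left_right
    obtain ⟨v, rfl⟩ := exists_eq_sq_of_isCoprime_of_mul_eq_sq hcop (nonneg_of_mul_nonneg_right
      (by linarith) hp0) hs
    obtain ⟨u, rfl⟩ := exists_eq_sq_of_isCoprime_of_mul_eq_sq hcop.symm hy (by rw [mul_comm, hs])
    exact ⟨u, v, Or.inl ⟨rfl, rfl⟩⟩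
  · have hs : x * s = k ^ 2 := mul_left_cancel₀ hp0.ne' (by rw [← h]; ring)
    have hcop : IsCoprime x s := hxy.of_mul_right_right
    obtain ⟨u, rfl⟩ := exists_eq_sq_of_isCoprime_of_mul_eq_sq hcop hx hs
    obtain ⟨v, rfl⟩ := exists_eq_sq_of_isCoprime_of_mul_eq_sq hcop.symm (nonneg_of_mul_nonneg_right
      (by linarith) hp0) (by rw [mul_comm, hs])
    exact ⟨u, v, Or.inr ⟨rfl, rfl⟩⟩

lemma Pell.exists_sq_sub_mul_sq_eq_neg_one {p : ℕ} (hp : p.Prime) (hp4 : p % 4 = 1) :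
    ∃ T U : ℤ, T ^ 2 - p * U ^ 2 = -1 := by
  have hp0 : (0 : ℤ) < p := by exact_mod_cast hp.pos
  have hpZ : Prime (p : ℤ) := Nat.prime_iff_prime_int.mp hp
  obtain ⟨a₁, hfund⟩ := IsFundamental.exists_of_not_isSquare hp0 hpZ.not_isSquare
  obtain ⟨⟨m, hm⟩, ⟨k, hk⟩⟩ := odd_and_even_of_sq_sub_mul_sq_eq_one (by omega) a₁.prop
  have hm1 : 1 ≤ m := by have := hfund.1; omega
  have hmk : m * (m + 1) = p * k ^ 2 := by
    have := a₁.prop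
    rw [hm, hk] at this
    exact mul_left_cancel₀ four_ne_zero (by linear_combination this)
  obtain ⟨u, v, ⟨rfl, hu⟩ | ⟨rfl, hv⟩⟩ := Int.exists_sq_of_isCoprime_of_mul_eq_prime_mul_sq hpZ hp0
    ⟨-1, 1, by ring⟩ (by omega) (by omega) hmk
  · have hsol : |u| ^ 2 - p * v ^ 2 = 1 := by rw [sq_abs, ← hu]; ring
    have hu1 : 1 < |u| := one_lt_sq_iff_one_lt_abs u |>.mp (by nlinarith)
    have hux : |u| < a₁.x := by
      rw [hm]
      exact lt_of_pow_lt_pow_left₀ 2 (by omega) (by rw [sq_abs]; nlinarith)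
    have := hfund.x_le_x (a := Solution₁.mk |u| v hsol) hu1
    rw [Solution₁.x_mk] at this
    omega
  · exact ⟨u, v, by rw [← hv]; ring⟩

/-- Kaplansky: if a prime p = a² + 4b², then p ≡ 1 (mod 4) and
T² - pU² = -1 is solvable in integers. -/
theorem stmt_6 (p : ℕ) (hp : p.Prime) (a b : ℤ)
    (h : (p : ℤ) = a ^ 2 + 4 * b ^ 2) :
    p % 4 = 1 ∧ ∃ T U : ℤ, T ^ 2 - (p : ℤ) * U ^ 2 = -1 := by
  have hp4 := hp.mod_four_eq_one_of_eq_sq_add_four_mul_sq h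
  exact ⟨hp4, Pell.exists_sq_sub_mul_sq_eq_neg_one hp hp4⟩
end

section
/- Let p be a prime with p = r^2 + 2s^2 and p ≡ 1 (mod 8). Then the Legendre symbol (r/p) equals the quartic residue symbol (2/p)_4, i.e., r is a quadratic residue mod p if and only if 2 is a fourth power modulo p. -/
/-!
Reducing p = r² + 2s² modulo p gives r² = -2s². Every prime factor q of s is a square mod p:
for q = 2 because p ≡ 1 (mod 8), and for odd q by quadratic reciprocity, since p ≡ r² (mod q).
As -1 is a square mod p too, s = e² is a square, and p ≡ 1 (mod 8) provides b with b⁴ = -1.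
Hence r² = 2(be)⁴, and r is a square exactly when 2 is a fourth power: if 2 = x⁴ then
r = ±(xbe)², and both signs give squares.
-/

theorem isSquare_iff_exists_pow_four_eq_of_sq_eq_mul_pow_four {F : Type*} [Field F]
    (hneg : IsSquare (-1 : F)) {a r t : F} (ht : t ≠ 0) (h : r ^ 2 = a * t ^ 4) :
    IsSquare r ↔ ∃ x, x ^ 4 = a := by
  constructor
  · rintro ⟨c, rfl⟩
    refine ⟨c / t, ?_⟩
    rw [div_pow, div_eq_iff (pow_ne_zero 4 ht)]
    linear_combination h
  · rintro ⟨x, rfl⟩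
    have hfac : (r - (x * t) ^ 2) * (r + (x * t) ^ 2) = 0 := by linear_combination h
    obtain ⟨i, hi⟩ := hneg
    rcases mul_eq_zero.mp hfac with hpos | hneg
    · exact ⟨x * t, by linear_combination hpos⟩
    · exact ⟨i * x * t, by linear_combination hneg + (x * t) ^ 2 * hi⟩

theorem isSquare_natCast_of_forall_prime_dvd {R : Type*} [CommSemiring R] {n : ℕ}
    (h : ∀ q, q.Prime → q ∣ n → IsSquare (q : R)) : IsSquare (n : R) := by
  induction n using induction_on_primes with
  | zero => exact ⟨0, by simp⟩
  | one => exact ⟨1, by simp⟩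
  | prime_mul q a hq ih =>
    push_cast
    exact (h q hq (dvd_mul_right q a)).mul (ih fun q' hq' hdvd => h q' hq' (hdvd.mul_left q))

namespace ZMod

variable {p : ℕ} [Fact p.Prime]

theorem intCast_ne_zero_of_eq_sq_add_mul_sq {r s m : ℤ} (h : (p : ℤ) = r ^ 2 + m * s ^ 2) :
    (s : ZMod p) ≠ 0 := by
  rw [Ne, intCast_zmod_eq_zero_iff_dvd]
  intro hps
  have hp : p.Prime := Fact.out
  have hpr : (p : ℤ) ∣ r := by
    refine (Nat.prime_iff_prime_int.mp hp).dvd_of_dvd_pow (n := 2) ?_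
    rw [show r ^ 2 = p - m * s ^ 2 by linarith]
    exact dvd_sub dvd_rfl ((dvd_pow hps two_ne_zero).mul_left m)
  have hsq : (p : ℤ) ^ 2 ∣ p := by
    have := dvd_add (pow_dvd_pow_of_dvd hpr 2) ((pow_dvd_pow_of_dvd hps 2).mul_left m)
    rwa [← h] at this
  have hle := Int.le_of_dvd (by exact_mod_cast hp.pos) hsq
  have htwo : (2 : ℤ) ≤ p := by exact_mod_cast hp.two_le
  nlinarith

theorem isSquare_prime_of_dvd_of_eq_sq_add_mul_sq {q : ℕ} [Fact q.Prime] (hp : p % 4 = 1)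
    (hq : q ≠ 2) {r s m : ℤ} (h : (p : ℤ) = r ^ 2 + m * s ^ 2) (hqs : (q : ℤ) ∣ s) :
    IsSquare (q : ZMod p) := by
  rw [exists_sq_eq_prime_iff_of_mod_four_eq_one hp hq]
  have hs : (s : ZMod q) = 0 := (intCast_zmod_eq_zero_iff_dvd s q).mpr hqs
  have hpr : (p : ZMod q) = r * r := by
    have := congrArg (fun z : ℤ => (z : ZMod q)) h
    push_cast at this
    rw [this, hs]
    ring
  exact ⟨r, hpr⟩

theorem isSquare_intCast_of_eq_sq_add_two_mul_sq (hp8 : p % 8 = 1) {r s : ℤ}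
    (h : (p : ℤ) = r ^ 2 + 2 * s ^ 2) : IsSquare (s : ZMod p) := by
  have hp2 : p ≠ 2 := by omega
  have habs : IsSquare ((s.natAbs : ℕ) : ZMod p) := by
    refine isSquare_natCast_of_forall_prime_dvd fun q hq hqs => ?_
    have := Fact.mk hq
    rcases eq_or_ne q 2 with rfl | hq2
    · exact_mod_cast (exists_sq_eq_two_iff hp2).mpr (Or.inl hp8)
    · exact isSquare_prime_of_dvd_of_eq_sq_add_mul_sq (by omega) hq2 h (Int.natCast_dvd.mpr hqs)
  rcases Int.natAbs_eq s with hs | hs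
  · rwa [hs, Int.cast_natCast]
  · rw [hs, Int.cast_neg, Int.cast_natCast, neg_eq_neg_one_mul]
    exact (exists_sq_eq_neg_one_iff.mpr (by omega)).mul habs

theorem exists_pow_four_eq_neg_one (hp8 : p % 8 = 1) : ∃ b : ZMod p, b ^ 4 = -1 := by
  obtain ⟨i, hi⟩ := exists_sq_eq_neg_one_iff (p := p) |>.mpr (by omega)
  have hi0 : i ≠ 0 := by
    rintro rfl
    simp at hi
  obtain ⟨b, rfl⟩ : IsSquare i := by
    rw [euler_criterion p hi0, show p / 2 = 4 * (p / 8) by omega, pow_mul,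
      show i ^ 4 = (i * i) ^ 2 by ring, ← hi]
    norm_num
  exact ⟨b, by rw [hi]; ring⟩

end ZMod

/-- For a prime p ≡ 1 (mod 8) with p = r² + 2s², r is a quadratic residue
mod p if and only if 2 is a fourth power modulo p. -/
theorem stmt_7 (p : ℕ) [Fact p.Prime] (hp8 : p % 8 = 1) (r s : ℤ)
    (h : (p : ℤ) = r ^ 2 + 2 * s ^ 2) :
    IsSquare (r : ZMod p) ↔ ∃ x : ZMod p, x ^ 4 = 2 := by
  obtain ⟨e, he⟩ := ZMod.isSquare_intCast_of_eq_sq_add_two_mul_sq hp8 h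
  obtain ⟨b, hb⟩ := ZMod.exists_pow_four_eq_neg_one hp8
  have hs0 := ZMod.intCast_ne_zero_of_eq_sq_add_mul_sq h
  have hbe : b * e ≠ 0 := by
    refine mul_ne_zero ?_ ?_ <;> rintro rfl
    · simp at hb
    · simp [he] at hs0
  have hrel : (r : ZMod p) ^ 2 = 2 * (b * e) ^ 4 := by
    have hp0 := congrArg (fun z : ℤ => (z : ZMod p)) h
    push_cast at hp0
    rw [ZMod.natCast_self, he] at hp0
    linear_combination -hp0 - 2 * e ^ 4 * hb
  exact isSquare_iff_exists_pow_four_eq_of_sq_eq_mul_pow_four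
    (ZMod.exists_sq_eq_neg_one_iff.mpr (by omega)) hbe hrel
end

section
/- Let p be a prime with p ≡ 1 (mod 8), write p = r^2 + 2s^2 with s = 2^j·u for u odd. Then the Legendre symbol (s/p) equals 1. -/
/-!
Since `p ≡ 1 (mod 8)`, both `-1` and `2` are squares mod `p`, so `(s/p) = (u/p)` where `u` is the
odd part of `|s|`. By reciprocity `(u/p) = (p/u)`, and `p ≡ r² (mod u)` with `r` prime to `u`
(a common factor of `r` and `s` would square-divide `p`), so `(p/u) = (r²/u) = 1`.
-/

open scoped NumberTheorySymbols

theorem isCoprime_of_squarefree_sq_add_mul_sq {r s : ℤ} (k : ℤ)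
    (h : Squarefree (r ^ 2 + k * s ^ 2)) : IsCoprime r s := by
  refine IsRelPrime.isCoprime fun d hdr hds ↦ h d ?_
  obtain ⟨a, rfl⟩ := hdr
  obtain ⟨b, rfl⟩ := hds
  exact ⟨a ^ 2 + k * b ^ 2, by ring⟩

namespace jacobiSym

theorem natAbs_left_of_mod_four_eq_one (a : ℤ) {b : ℕ} (hb : b % 4 = 1) :
    J(a.natAbs | b) = J(a | b) := by
  have hb_odd : Odd b := Nat.odd_iff.mpr (by omega)
  have hχ : ZMod.χ₄ b = 1 := by rw [ZMod.χ₄_nat_mod_four, hb]; decide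
  rcases Int.eq_nat_or_neg a with ⟨n, rfl | rfl⟩
  · rw [Int.natAbs_natCast]
  · rw [Int.natAbs_neg, Int.natAbs_natCast, jacobiSym.neg _ hb_odd, hχ, one_mul]

theorem ordCompl_two_left_of_mod_eight_eq_one (n : ℕ) {b : ℕ} (hb : b % 8 = 1) :
    J(ordCompl[2] n | b) = J(n | b) := by
  have hb_odd : Odd b := Nat.odd_iff.mpr (by omega)
  have h2 : J(2 | b) = 1 := by
    rw [at_two hb_odd, ZMod.χ₈_nat_eq_if_mod_eight, hb, if_neg (by omega), if_pos (by decide)]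
  conv_rhs => rw [← Nat.ordProj_mul_ordCompl_eq_self n 2]
  push_cast
  rw [mul_left, pow_left, h2, one_pow, one_mul]

theorem eq_one_of_modEq_sq {u b : ℕ} {r : ℤ} (hu : Odd u) (hb : b % 4 = 1)
    (hr : IsCoprime r u) (h : (b : ℤ) ≡ r ^ 2 [ZMOD u]) : J(u | b) = 1 := by
  rw [quadratic_reciprocity_one_mod_four' hu hb, mod_left' h]
  exact sq_one' (Int.isCoprime_iff_gcd_eq_one.mp hr)

end jacobiSym

/-- For a prime p ≡ 1 (mod 8) written as p = r² + 2s², the Legendre symbol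
(s/p) equals 1. -/
theorem stmt_8 (p : ℕ) [Fact p.Prime] (hp8 : p % 8 = 1) (r s : ℤ)
    (h : (p : ℤ) = r ^ 2 + 2 * s ^ 2) :
    legendreSym p s = 1 := by
  have hp4 : p % 4 = 1 := by omega
  have hrs : IsCoprime r s := isCoprime_of_squarefree_sq_add_mul_sq 2 <| by
    rw [← h, Int.squarefree_natCast]
    exact (Fact.out : p.Prime).squarefree
  have hs : s ≠ 0 := by
    rintro rfl
    have hr : r ^ 2 = 1 := Int.isUnit_sq (isCoprime_zero_right.mp hrs)
    have hp1 : (p : ℤ) = 1 := by simpa [hr] using h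
    exact (Fact.out : p.Prime).one_lt.ne' (by exact_mod_cast hp1)
  set u := ordCompl[2] s.natAbs
  have hu : Odd u := Nat.odd_iff.mpr <| Nat.two_dvd_ne_zero.mp <|
    Nat.not_dvd_ordCompl Nat.prime_two (Int.natAbs_ne_zero.mpr hs)
  have hus : (u : ℤ) ∣ s := Int.natCast_dvd.mpr (Nat.ordCompl_dvd _ 2)
  have hpr : (p : ℤ) ≡ r ^ 2 [ZMOD u] := by
    have h2s : (u : ℤ) ∣ 2 * s ^ 2 := dvd_mul_of_dvd_right (dvd_pow hus two_ne_zero) 2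
    simpa [h] using (Int.modEq_zero_iff_dvd.mpr h2s).add_left (r ^ 2)
  rw [jacobiSym.legendreSym.to_jacobiSym, ← jacobiSym.natAbs_left_of_mod_four_eq_one s hp4,
    ← jacobiSym.ordCompl_two_left_of_mod_eight_eq_one _ hp8]
  exact jacobiSym.eq_one_of_modEq_sq hu hp4 (hrs.of_isCoprime_of_dvd_right hus) hpr
end
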